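/- arXiv:1807.00568 — 3 statements merged into one kernel-verified Lean document; each statement's English description precedes it below -/
import Mathlib

section
/- Estimation lemma: let κ > 0 and let Q ∈ R^{d×d} be symmetric positive definite with spectral norm ‖Q‖ ≤ C for some constant C > 0, and let B ∈ R^{d×d} be symmetric positive definite. Then ‖Q − Q(Q + κB)^{-1} κB‖ ≤ (C² ‖B^{-1}‖)/κ, where ‖·‖ denotes the spectral (operator) norm. -/
/-!
Since `Q - Q (Q + κB)⁻¹ κB = Q (Q + κB)⁻¹ Q`, it suffices to show
`‖(Q + κB)⁻¹‖ ≤ ‖(κB)⁻¹‖ = ‖B⁻¹‖ / κ`. Inversion reverses the norm order on positive definite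
matrices: if `0 < M ≤ N` and `y = N x`, then
`‖x‖² ≤ ‖M⁻¹‖ ⟪M x, x⟫ ≤ ‖M⁻¹‖ ⟪N x, x⟫ ≤ ‖M⁻¹‖ ‖x‖ ‖y‖`, so `‖N⁻¹ y‖ ≤ ‖M⁻¹‖ ‖y‖`.
-/

/-- The spectral (operator) norm of a real square matrix. -/
noncomputable def matSpectralNorm {d : ℕ} (A : Matrix (Fin d) (Fin d) ℝ) : ℝ :=
  ‖(Matrix.toEuclideanCLM (𝕜 := ℝ) A :
      EuclideanSpace ℝ (Fin d) →L[ℝ] EuclideanSpace ℝ (Fin d))‖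

open scoped Matrix.Norms.L2Operator MatrixOrder InnerProductSpace ComplexOrder

namespace Matrix

variable {𝕜 n : Type*} [RCLike 𝕜] [Fintype n] [DecidableEq n]

lemma sub_mul_inv_add_mul_eq_mul_inv_add_mul {α : Type*} [CommRing α] {A B : Matrix n n α}
    (h : IsUnit (A + B).det) : A - A * (A + B)⁻¹ * B = A * (A + B)⁻¹ * A := by
  calc A - A * (A + B)⁻¹ * B = A * (A + B)⁻¹ * (A + B) - A * (A + B)⁻¹ * B := by
        rw [Matrix.mul_assoc A (A + B)⁻¹ (A + B), nonsing_inv_mul _ h, Matrix.mul_one]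
    _ = A * (A + B)⁻¹ * A := by rw [← Matrix.mul_sub, add_sub_cancel_right]

lemma norm_sq_le_norm_inv_mul_re_inner {M : Matrix n n 𝕜} (hM : M.PosDef)
    (x : EuclideanSpace 𝕜 n) :
    ‖x‖ ^ 2 ≤ ‖M⁻¹‖ * RCLike.re ⟪toEuclideanCLM (𝕜 := 𝕜) M x, x⟫_𝕜 := by
  -- Writing `M = R⋆ R`, both sides are expressed through `R`: `⟪M x, x⟫ = ‖R x‖²`, and
  -- `‖M⁻¹‖ = ‖R⁻¹‖²` by the C⋆-identity.
  obtain ⟨R, rfl⟩ := CStarAlgebra.nonneg_iff_eq_star_mul_self.mp hM.posSemidef.nonneg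
  have hR : IsUnit R.det := (isUnit_iff_isUnit_det R).mp (isUnit_of_mul_isUnit_right hM.isUnit)
  set T := toEuclideanCLM (𝕜 := 𝕜) R
  have h_inner : RCLike.re ⟪toEuclideanCLM (𝕜 := 𝕜) (star R * R) x, x⟫_𝕜 = ‖T x‖ ^ 2 := by
    rw [map_mul, map_star, ContinuousLinearMap.star_eq_adjoint, mul_apply_eq_comp,
      ContinuousLinearMap.adjoint_inner_left, inner_self_eq_norm_sq]
  have h_inv : ‖(star R * R)⁻¹‖ = ‖R⁻¹‖ * ‖R⁻¹‖ := by
    rw [Matrix.mul_inv_rev, star_eq_conjTranspose, ← conjTranspose_nonsing_inv,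
      ← star_eq_conjTranspose, CStarRing.norm_self_mul_star]
  have h_x : ‖x‖ ≤ ‖R⁻¹‖ * ‖T x‖ := by
    calc ‖x‖ = ‖toEuclideanCLM (𝕜 := 𝕜) R⁻¹ (T x)‖ := by
          rw [← mul_apply_eq_comp, ← map_mul, nonsing_inv_mul _ hR, map_one]
          rfl
      _ ≤ ‖R⁻¹‖ * ‖T x‖ := (toEuclideanCLM (𝕜 := 𝕜) R⁻¹).le_opNorm _
  rw [h_inner, h_inv]
  nlinarith [norm_nonneg x]

lemma re_inner_toEuclideanCLM_le_of_le {M N : Matrix n n 𝕜} (hMN : M ≤ N)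
    (x : EuclideanSpace 𝕜 n) :
    RCLike.re ⟪toEuclideanCLM (𝕜 := 𝕜) M x, x⟫_𝕜 ≤
      RCLike.re ⟪toEuclideanCLM (𝕜 := 𝕜) N x, x⟫_𝕜 := by
  have h_pos : (toEuclideanCLM (𝕜 := 𝕜) (N - M)).IsPositive := by
    rw [← ContinuousLinearMap.isPositive_toLinearMap_iff, coe_toEuclideanCLM_eq_toEuclideanLin,
      isPositive_toEuclideanLin_iff]
    exact hMN
  have := h_pos.re_inner_nonneg_left x
  rw [map_sub, _root_.sub_apply, inner_sub_left, map_sub] at this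
  linarith

lemma norm_inv_le_norm_inv_of_le {M N : Matrix n n 𝕜} (hM : M.PosDef) (hMN : M ≤ N) :
    ‖N⁻¹‖ ≤ ‖M⁻¹‖ := by
  have hN : N.PosDef := by simpa using hM.add_posSemidef hMN
  refine (toEuclideanCLM (𝕜 := 𝕜) N⁻¹).opNorm_le_bound (norm_nonneg _) fun y ↦ ?_
  set x := toEuclideanCLM (𝕜 := 𝕜) N⁻¹ y
  have hNx : toEuclideanCLM (𝕜 := 𝕜) N x = y := by
    rw [← mul_apply_eq_comp, ← map_mul,
      mul_nonsing_inv _ ((isUnit_iff_isUnit_det N).mp hN.isUnit), map_one]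
    rfl
  have h_sq : ‖x‖ ^ 2 ≤ ‖M⁻¹‖ * ‖y‖ * ‖x‖ := calc
    ‖x‖ ^ 2 ≤ ‖M⁻¹‖ * RCLike.re ⟪toEuclideanCLM (𝕜 := 𝕜) M x, x⟫_𝕜 :=
      norm_sq_le_norm_inv_mul_re_inner hM x
    _ ≤ ‖M⁻¹‖ * RCLike.re ⟪toEuclideanCLM (𝕜 := 𝕜) N x, x⟫_𝕜 :=
      mul_le_mul_of_nonneg_left (re_inner_toEuclideanCLM_le_of_le hMN x) (norm_nonneg _)
    _ ≤ ‖M⁻¹‖ * (‖y‖ * ‖x‖) := by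
      gcongr
      rw [hNx]
      exact re_inner_le_norm y x
    _ = ‖M⁻¹‖ * ‖y‖ * ‖x‖ := by ring
  rcases (norm_nonneg x).eq_or_lt with hx | hx
  · rw [← hx]
    positivity
  · exact le_of_mul_le_mul_right (by rwa [sq] at h_sq) hx

lemma norm_inv_smul {A : Matrix n n 𝕜} (hA : IsUnit A.det) {c : 𝕜} (hc : c ≠ 0) :
    ‖(c • A)⁻¹‖ = ‖A⁻¹‖ / ‖c‖ := by
  have h_inv : (c • A)⁻¹ = c⁻¹ • A⁻¹ := inv_eq_left_inv <| by
    rw [smul_mul_smul_comm, inv_mul_cancel₀ hc, nonsing_inv_mul _ hA, one_smul]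
  rw [h_inv, norm_smul, norm_inv, inv_mul_eq_div]

end Matrix

open Matrix in
theorem estimation_lemma_general {d : ℕ} (Q B : Matrix (Fin d) (Fin d) ℝ) (κ C : ℝ)
    (hQ : Q.PosDef) (hB : B.PosDef) (hκ : 0 < κ)
    (hQnorm : matSpectralNorm Q ≤ C) :
    matSpectralNorm (Q - Q * (Q + κ • B)⁻¹ * (κ • B)) ≤ C ^ 2 * matSpectralNorm B⁻¹ / κ := by
  simp only [matSpectralNorm, ← cstar_norm_def] at hQnorm ⊢
  have hκB : (κ • B).PosDef := hB.smul hκ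
  have h_le : κ • B ≤ Q + κ • B := le_add_of_nonneg_left hQ.posSemidef.nonneg
  have h_inv : ‖(Q + κ • B)⁻¹‖ ≤ ‖B⁻¹‖ / κ := by
    calc ‖(Q + κ • B)⁻¹‖ ≤ ‖(κ • B)⁻¹‖ := norm_inv_le_norm_inv_of_le hκB h_le
      _ = ‖B⁻¹‖ / κ := by
        rw [norm_inv_smul ((isUnit_iff_isUnit_det B).mp hB.isUnit) hκ.ne',
          Real.norm_of_nonneg hκ.le]
  have hS : IsUnit (Q + κ • B).det := (isUnit_iff_isUnit_det _).mp (hQ.add hκB).isUnit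
  have hC : 0 ≤ C := (norm_nonneg Q).trans hQnorm
  rw [sub_mul_inv_add_mul_eq_mul_inv_add_mul hS]
  calc ‖Q * (Q + κ • B)⁻¹ * Q‖ ≤ ‖Q‖ * ‖(Q + κ • B)⁻¹‖ * ‖Q‖ := norm_mul₃_le
    _ ≤ C * (‖B⁻¹‖ / κ) * C := by gcongr
    _ = C ^ 2 * ‖B⁻¹‖ / κ := by ring

/-- Estimation lemma: `‖Q − Q(Q + κB)⁻¹ κB‖ ≤ C² ‖B⁻¹‖ / κ`. -/
theorem estimation_lemma {d : ℕ} (Q B : Matrix (Fin d) (Fin d) ℝ) (κ C : ℝ)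
    (hQ : Q.PosDef) (hB : B.PosDef) (hκ : 0 < κ) (hC : 0 < C)
    (hQnorm : matSpectralNorm Q ≤ C) :
    matSpectralNorm (Q - Q * (Q + κ • B)⁻¹ * (κ • B)) ≤ C ^ 2 * matSpectralNorm B⁻¹ / κ :=
  estimation_lemma_general Q B κ C hQ hB hκ hQnorm
end

section
/- Bound on the Kalman gain matrix: let Q ∈ R^{d×d} be symmetric positive semidefinite with ‖Q‖ ≤ C, let Σ ∈ R^{d×d} be symmetric positive definite, and λ > 0. Then the matrix P = λ Q (Q + λΣ)^{-1} satisfies ‖P‖ ≤ C ‖Σ^{-1}‖, uniformly in λ. -/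
section InverseOfSum

variable {R : Type*} [Ring R] {q b x : R}

theorem mul_mul_eq_sub_mul_mul_of_mul_add_eq_one (h : x * (q + b) = 1) :
    q * x * b = q - q * x * q := by
  rw [eq_sub_iff_add_eq, mul_assoc, mul_assoc, ← mul_add, add_comm, ← mul_add, h, mul_one]

theorem mul_mul_eq_sub_mul_mul_of_add_mul_eq_one (h : (q + b) * x = 1) :
    b * x * q = q - q * x * q := by
  rw [eq_sub_iff_add_eq, ← add_mul, ← add_mul, add_comm b, h, one_mul]

variable [PartialOrder R] [StarRing R] [StarOrderedRing R]

theorem sub_mul_mul_nonneg_of_mul_add_eq_one (hq : 0 ≤ q) (hb : 0 ≤ b) (hx : IsSelfAdjoint x)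
    (hxa : x * (q + b) = 1) (hax : (q + b) * x = 1) : 0 ≤ q - q * x * q := by
  set M := q - q * x * q
  have hsplit : M = q * x * b * star (q * x) + b * x * q * star (b * x) := by
    rw [star_mul, star_mul, hx.star_eq, hq.star_eq, hb.star_eq]
    calc M = M * x * (q + b) := by rw [mul_assoc, hxa, mul_one]
      _ = (q * x * b) * x * q + (b * x * q) * x * b := by
        rw [mul_mul_eq_sub_mul_mul_of_mul_add_eq_one hxa,
          mul_mul_eq_sub_mul_mul_of_add_mul_eq_one hax, mul_add, add_comm]
      _ = _ := by simp only [mul_assoc]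
  rw [hsplit]
  exact add_nonneg (star_right_conjugate_nonneg hb _) (star_right_conjugate_nonneg hq _)

end InverseOfSum

namespace ContinuousLinearMap

variable {𝕜 E : Type*} [RCLike 𝕜] [NormedAddCommGroup E] [InnerProductSpace 𝕜 E]

theorem norm_le_norm_of_nonneg_of_le {T S : E →L[𝕜] E} (hT : 0 ≤ T) (hTS : T ≤ S) :
    ‖T‖ ≤ ‖S‖ := by
  rw [nonneg_iff_isPositive] at hT
  rw [norm_eq_iSup_rayleighQuotient T hT.isSymmetric]
  refine ciSup_le fun x => ?_
  have hT_nonneg : 0 ≤ T.rayleighQuotient x :=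
    div_nonneg (hT.re_inner_nonneg_left x) (by positivity)
  have hST_nonneg : 0 ≤ (S - T).rayleighQuotient x :=
    div_nonneg (hTS.re_inner_nonneg_left x) (by positivity)
  calc |T.rayleighQuotient x| = T.rayleighQuotient x := abs_of_nonneg hT_nonneg
    _ ≤ S.rayleighQuotient x := by
      rw [← add_sub_cancel T S, rayleighQuotient_add]; linarith
    _ ≤ ‖S‖ := (le_abs_self _).trans (S.rayleighQuotient_le_norm x)

end ContinuousLinearMap

open scoped ComplexOrder MatrixOrder Matrix.Norms.L2Operator

namespace Matrix

variable {𝕜 n : Type*} [RCLike 𝕜] [Fintype n] [DecidableEq n]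

theorem isPositive_toEuclideanCLM_iff {A : Matrix n n 𝕜} :
    (toEuclideanCLM (n := n) (𝕜 := 𝕜) A).IsPositive ↔ A.PosSemidef := by
  rw [← ContinuousLinearMap.isPositive_toLinearMap_iff, coe_toEuclideanCLM_eq_toEuclideanLin,
    isPositive_toEuclideanLin_iff]

theorem l2_opNorm_le_of_nonneg_of_le {A B : Matrix n n 𝕜} (hA : 0 ≤ A) (hAB : A ≤ B) :
    ‖A‖ ≤ ‖B‖ := by
  rw [cstar_norm_def, cstar_norm_def]
  refine ContinuousLinearMap.norm_le_norm_of_nonneg_of_le ?_ ?_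
  · rw [ContinuousLinearMap.nonneg_iff_isPositive, isPositive_toEuclideanCLM_iff]
    exact nonneg_iff_posSemidef.mp hA
  · rw [ContinuousLinearMap.le_def, ← map_sub, isPositive_toEuclideanCLM_iff]
    exact hAB

end Matrix

open Matrix

/-- Bound on the Kalman gain matrix:
`‖λ Q (Q + λS)⁻¹‖ ≤ C ‖S⁻¹‖`, uniformly in `λ > 0`. -/
theorem kalman_gain_bound {d : ℕ} (Q S : Matrix (Fin d) (Fin d) ℝ) (C l : ℝ)
    (hQ : Q.PosSemidef) (hS : S.PosDef) (hl : 0 < l)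
    (hQC : matSpectralNorm Q ≤ C) :
    matSpectralNorm (l • (Q * (Q + l • S)⁻¹)) ≤ C * matSpectralNorm S⁻¹ := by
  set A := Q + l • S
  have hlS : (l • S).PosDef := hS.smul hl
  have hA : A.PosDef := PosDef.posSemidef_add hQ hlS
  have hA_inv_mul : A⁻¹ * A = 1 := nonsing_inv_mul A hA.det_pos.ne'.isUnit
  have hA_mul_inv : A * A⁻¹ = 1 := mul_nonsing_inv A hA.det_pos.ne'.isUnit
  set M := Q - Q * A⁻¹ * Q
  have hgain : l • (Q * A⁻¹) = M * S⁻¹ :=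
    calc l • (Q * A⁻¹) = Q * A⁻¹ * (l • S) * S⁻¹ := by
          rw [mul_assoc _ (l • S), smul_mul, mul_nonsing_inv S hS.det_pos.ne'.isUnit,
            Matrix.mul_smul, mul_one]
      _ = M * S⁻¹ := by rw [mul_mul_eq_sub_mul_mul_of_mul_add_eq_one hA_inv_mul]
  have hM_nonneg : 0 ≤ M :=
    sub_mul_mul_nonneg_of_mul_add_eq_one hQ.nonneg hlS.posSemidef.nonneg hA.inv.isHermitian
      hA_inv_mul hA_mul_inv
  have hM_le : M ≤ Q :=
    sub_le_self _ (IsSelfAdjoint.conjugate_nonneg hA.inv.posSemidef.nonneg hQ.isHermitian)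
  calc matSpectralNorm (l • (Q * A⁻¹)) = ‖M * S⁻¹‖ := by rw [hgain]; rfl
    _ ≤ ‖M‖ * ‖S⁻¹‖ := norm_mul_le _ _
    _ ≤ ‖Q‖ * ‖S⁻¹‖ := by gcongr; exact l2_opNorm_le_of_nonneg_of_le hM_nonneg hM_le
    _ ≤ C * matSpectralNorm S⁻¹ := mul_le_mul_of_nonneg_right hQC (norm_nonneg _)
end

section
/- Difference of scaled gains: let Q ∈ R^{d×d} be symmetric positive semidefinite with ‖Q‖ ≤ C, Σ ∈ R^{d×d} symmetric positive definite, λ > 0. Then ‖λ Q (Q + λΣ)^{-1} Q − Q Σ^{-1} Q‖ ≤ C³ ‖Σ^{-1}‖² / λ. -/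
/-!
Writing `M = Q + λΣ`, the resolvent identity `M⁻¹ Q Σ⁻¹ = Σ⁻¹ - λ M⁻¹` turns the difference into
`-Q M⁻¹ Q Σ⁻¹ Q`, so it suffices to show `‖M⁻¹‖ ≤ ‖Σ⁻¹‖ / λ`. That follows from coercivity:
`⟪M y, y⟫ ≥ λ ⟪Σ y, y⟫ ≥ (λ / ‖Σ⁻¹‖) ‖y‖²`, where the last step is `‖A y‖² ≤ ‖A‖ ⟪A y, y⟫`
for the positive semidefinite `A = Σ⁻¹`, proved with the square root of `A`.
-/

open Matrix
open scoped Matrix.Norms.L2Operator MatrixOrder RealInnerProductSpace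

namespace Matrix

variable {n : Type*} [Fintype n] [DecidableEq n]

section Field

variable {K : Type*} [Field K]

lemma inv_add_smul_mul_mul_inv {Q S : Matrix n n K} {l : K} (hS : IsUnit S)
    (hM : IsUnit (Q + l • S)) : (Q + l • S)⁻¹ * Q * S⁻¹ = S⁻¹ - l • (Q + l • S)⁻¹ := by
  rw [isUnit_iff_isUnit_det] at hS hM
  calc (Q + l • S)⁻¹ * Q * S⁻¹ = (Q + l • S)⁻¹ * ((Q + l • S) - l • S) * S⁻¹ := by
        rw [add_sub_cancel_right]
    _ = S⁻¹ - l • (Q + l • S)⁻¹ := by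
      rw [mul_sub, sub_mul, nonsing_inv_mul _ hM, one_mul, mul_smul_comm, smul_mul_assoc,
        mul_assoc, mul_nonsing_inv _ hS, mul_one]

lemma scaled_gain_sub_eq {Q S : Matrix n n K} {l : K} (hS : IsUnit S) (hM : IsUnit (Q + l • S)) :
    l • (Q * (Q + l • S)⁻¹ * Q) - Q * S⁻¹ * Q = -(Q * (Q + l • S)⁻¹ * Q * S⁻¹ * Q) := by
  have h := congr(Q * $(inv_add_smul_mul_mul_inv hS hM) * Q)
  simp only [mul_sub, sub_mul, mul_smul_comm, smul_mul_assoc, ← mul_assoc] at h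
  rw [h]
  abel

end Field

lemma toEuclideanCLM_apply_apply_of_mul_eq_one {𝕜 : Type*} [RCLike 𝕜] {A B : Matrix n n 𝕜}
    (h : A * B = 1) (x : EuclideanSpace 𝕜 n) :
    toEuclideanCLM (𝕜 := 𝕜) A (toEuclideanCLM (𝕜 := 𝕜) B x) = x := by
  rw [← mul_apply_eq_comp, ← map_mul, h, map_one, one_apply_eq_self]

lemma PosSemidef.norm_toEuclideanCLM_sq_le {A : Matrix n n ℝ} (hA : A.PosSemidef)
    (y : EuclideanSpace ℝ n) :
    ‖toEuclideanCLM (𝕜 := ℝ) A y‖ ^ 2 ≤ ‖A‖ * ⟪toEuclideanCLM (𝕜 := ℝ) A y, y⟫ := by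
  set R := CFC.sqrt A
  have hR : R.IsHermitian := (CFC.sqrt_nonneg A).posSemidef.isHermitian
  have hRR : R * R = A := CFC.sqrt_mul_sqrt_self A hA.nonneg
  have hAR : toEuclideanCLM (𝕜 := ℝ) A y =
      toEuclideanCLM (𝕜 := ℝ) R (toEuclideanCLM (𝕜 := ℝ) R y) := by
    rw [← hRR, map_mul]
    rfl
  have hnorm : ‖A‖ = ‖R‖ ^ 2 := by
    rw [← hRR, sq, ← l2_opNorm_conjTranspose_mul_self, hR.eq]
  have hinner : ⟪toEuclideanCLM (𝕜 := ℝ) A y, y⟫ = ‖toEuclideanCLM (𝕜 := ℝ) R y‖ ^ 2 := by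
    rw [hAR]
    exact ((hR.isSelfAdjoint.map _).isSymmetric _ _).trans (real_inner_self_eq_norm_sq _)
  calc ‖toEuclideanCLM (𝕜 := ℝ) A y‖ ^ 2 ≤ (‖R‖ * ‖toEuclideanCLM (𝕜 := ℝ) R y‖) ^ 2 := by
        rw [hAR]
        gcongr
        exact (toEuclideanCLM (𝕜 := ℝ) R).le_opNorm _
    _ = ‖A‖ * ⟪toEuclideanCLM (𝕜 := ℝ) A y, y⟫ := by
      rw [hnorm, hinner]
      ring

lemma PosDef.norm_sq_le_norm_inv_mul_inner {S : Matrix n n ℝ} (hS : S.PosDef)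
    (x : EuclideanSpace ℝ n) : ‖x‖ ^ 2 ≤ ‖S⁻¹‖ * ⟪toEuclideanCLM (𝕜 := ℝ) S x, x⟫ := by
  have hSS : S⁻¹ * S = 1 := S.nonsing_inv_mul ((isUnit_iff_isUnit_det S).mp hS.isUnit)
  have h := hS.inv.posSemidef.norm_toEuclideanCLM_sq_le (toEuclideanCLM (𝕜 := ℝ) S x)
  rwa [toEuclideanCLM_apply_apply_of_mul_eq_one hSS, real_inner_comm] at h

lemma norm_inv_add_smul_le {Q S : Matrix n n ℝ} (hQ : Q.PosSemidef) (hS : S.PosDef) {l : ℝ}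
    (hl : 0 < l) : ‖(Q + l • S)⁻¹‖ ≤ ‖S⁻¹‖ / l := by
  set M := Q + l • S
  have hM : IsUnit M := (PosDef.posSemidef_add hQ (hS.smul hl)).isUnit
  refine (toEuclideanCLM (𝕜 := ℝ) M⁻¹).opNorm_le_bound (by positivity) fun x ↦ ?_
  set y := toEuclideanCLM (𝕜 := ℝ) M⁻¹ x
  have hMy : toEuclideanCLM (𝕜 := ℝ) M y = x :=
    toEuclideanCLM_apply_apply_of_mul_eq_one (M.mul_nonsing_inv ((isUnit_iff_isUnit_det M).mp hM)) x
  have hQy : 0 ≤ ⟪toEuclideanCLM (𝕜 := ℝ) Q y, y⟫ :=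
    (isPositive_toEuclideanLin_iff.mpr hQ).inner_nonneg_left y
  have key : l * ‖y‖ ^ 2 ≤ ‖S⁻¹‖ * (‖x‖ * ‖y‖) := calc
    l * ‖y‖ ^ 2 ≤ ‖S⁻¹‖ * (l * ⟪toEuclideanCLM (𝕜 := ℝ) S y, y⟫) := by
      nlinarith [hS.norm_sq_le_norm_inv_mul_inner y]
    _ ≤ ‖S⁻¹‖ * ⟪toEuclideanCLM (𝕜 := ℝ) M y, y⟫ := by
      gcongr
      rw [map_add, map_smul, _root_.add_apply, _root_.smul_apply,
        inner_add_left, real_inner_smul_left]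
      linarith
    _ ≤ ‖S⁻¹‖ * (‖x‖ * ‖y‖) := by
      rw [hMy]
      gcongr
      exact real_inner_le_norm x y
  rw [div_mul_eq_mul_div, le_div_iff₀ hl]
  rcases (norm_nonneg y).eq_or_lt with hy | hy
  · rw [← hy, zero_mul]
    positivity
  · exact le_of_mul_le_mul_right (by linarith) hy

end Matrix

/-- Difference of scaled gains:
`‖λ Q (Q + λS)⁻¹ Q − Q S⁻¹ Q‖ ≤ C³ ‖S⁻¹‖² / λ`. -/
theorem scaled_gain_diff_bound {d : ℕ} (Q S : Matrix (Fin d) (Fin d) ℝ) (C l : ℝ)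
    (hQ : Q.PosSemidef) (hS : S.PosDef) (hl : 0 < l)
    (hQC : matSpectralNorm Q ≤ C) :
    matSpectralNorm (l • (Q * (Q + l • S)⁻¹ * Q) - Q * S⁻¹ * Q)
      ≤ C ^ 3 * matSpectralNorm S⁻¹ ^ 2 / l := by
  change ‖Q‖ ≤ C at hQC
  have hM : IsUnit (Q + l • S) := (PosDef.posSemidef_add hQ (hS.smul hl)).isUnit
  calc ‖l • (Q * (Q + l • S)⁻¹ * Q) - Q * S⁻¹ * Q‖
      = ‖Q * (Q + l • S)⁻¹ * Q * S⁻¹ * Q‖ := by rw [scaled_gain_sub_eq hS.isUnit hM, norm_neg]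
    _ ≤ C * (‖S⁻¹‖ / l) * C * ‖S⁻¹‖ * C :=
      norm_mul_le_of_le (norm_mul_le_of_le (norm_mul_le_of_le
        (norm_mul_le_of_le hQC (norm_inv_add_smul_le hQ hS hl)) hQC) le_rfl) hQC
    _ = C ^ 3 * ‖S⁻¹‖ ^ 2 / l := by ring
end
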